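/- For k ≥ 1, the generating function of Motzkin paths staying strictly below height k is the ratio of inverse Motzkin polynomials: Σ_{n≥0} M_{n;ω}^{(k)} t^n = (Σ_{i=0}^{k−1} m_{k−1,i} t^{k−1−i}) / (Σ_{i=0}^{k} m_{k,i} t^{k−i}). -/

import Mathlib

open scoped BigOperators

/-- Weighted count of Motzkin paths from (0,0) to (n,j) staying weakly above the
x-axis and strictly below the line y = k, horizontal steps weighted ω. -/
def motzkinB (ω : ℚ) (k : ℕ) : ℕ → ℤ → ℚ
  | 0, j => if j = 0 ∧ 0 < (k:ℤ) then 1 else 0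
  | n+1, j => if j < 0 ∨ (k:ℤ) ≤ j then 0 else
      motzkinB ω k n (j-1) + ω * motzkinB ω k n j + motzkinB ω k n (j+1)

/-- Inverse Motzkin matrix entries: m i j is the coefficient of t^i in
t^j * (1 + ω t + t^2)⁻¹ ^ (j+1). -/
noncomputable def minv (ω : ℚ) (i j : ℕ) : ℚ :=
  PowerSeries.coeff (R := ℚ) i ((PowerSeries.X : PowerSeries ℚ) ^ j *
    ((1 + PowerSeries.C (R := ℚ) ω * PowerSeries.X + PowerSeries.X ^ 2)⁻¹) ^ (j + 1))

/-!
Write `B_j` for the generating function of the bounded paths ending at height `j`, and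
`P_m = ∑ᵢ m_{m,i} t^{m-i}`, `P_{-1} = 0`. Removing the last step of a path gives the tridiagonal
system `B_j = [j = 0] + t (B_{j-1} + ω B_j + B_{j+1})` for `0 ≤ j < k`, with `B_{-1} = B_k = 0`.
Comparing coefficients in `(1 + ωt + t²) (1 + ωt + t²)^{-(i+2)} = (1 + ωt + t²)^{-(i+1)}` shows that
the `P_m` satisfy the three-term recurrence `P_{m+1} + ωt P_m + t² P_{m-1} = P_m`. With it one
eliminates the unknowns from the top: `P_{k-j} B_j = t P_{k-j-1} B_{j-1} + [j = 0] P_{k-1}` for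
`j = k, k-1, …, 0`, and the case `j = 0` is the claim.
-/

open PowerSeries Finset

section InverseMotzkin

variable {K : Type*} [Field K] (ω : K)

noncomputable def motzkinDenom : K⟦X⟧ := 1 + C ω * X + X ^ 2

theorem motzkinDenom_mul_inv_pow_succ (e : ℕ) :
    motzkinDenom ω * (motzkinDenom ω)⁻¹ ^ (e + 1) = (motzkinDenom ω)⁻¹ ^ e := by
  rw [pow_succ', ← mul_assoc, PowerSeries.mul_inv_cancel _ (by simp [motzkinDenom]), one_mul]

/-- The index is shifted by one, so that the sequence starts with `0`:
`invMotzkinPoly ω (m + 1) = ∑_{i ≤ m} m_{m,i} t^{m-i}`. -/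
noncomputable def invMotzkinPoly (m : ℕ) : K⟦X⟧ :=
  ∑ i ∈ range m, C (coeff (m - 1) (X ^ i * (motzkinDenom ω)⁻¹ ^ (i + 1))) * X ^ (m - 1 - i)

theorem coeff_invMotzkinPoly (m n : ℕ) :
    coeff n (invMotzkinPoly ω m) =
      if n + 1 ≤ m then coeff n ((motzkinDenom ω)⁻¹ ^ (m - n)) else 0 := by
  simp only [invMotzkinPoly, map_sum, coeff_C_mul_X_pow]
  split_ifs with h
  · rw [sum_eq_single_of_mem (m - 1 - n) (mem_range.2 (by omega))
      (fun i hi _ => if_neg (by rw [mem_range] at hi; omega)), if_pos (by omega), coeff_X_pow_mul',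
      if_pos (by omega)]
    congr 2 <;> omega
  · exact sum_eq_zero fun i hi => if_neg (by rw [mem_range] at hi; omega)

theorem coeff_X_pow_mul_invMotzkinPoly (j m n : ℕ) :
    coeff n (X ^ j * invMotzkinPoly ω m) =
      if n + 1 ≤ m + j then coeff n (X ^ j * (motzkinDenom ω)⁻¹ ^ (m + j - n)) else 0 := by
  rw [coeff_X_pow_mul', coeff_X_pow_mul', coeff_invMotzkinPoly]
  by_cases hj : j ≤ n
  · simp only [if_pos hj]
    congr 1
    · exact propext (by omega)
    · congr 2; omega
  · simp [hj]

theorem invMotzkinPoly_zero : invMotzkinPoly ω 0 = 0 := by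
  simp [invMotzkinPoly]

theorem invMotzkinPoly_add_two (m : ℕ) :
    invMotzkinPoly ω (m + 2) + C ω * X * invMotzkinPoly ω (m + 1) + X ^ 2 * invMotzkinPoly ω m =
      invMotzkinPoly ω (m + 1) := by
  ext n
  have h0 := coeff_X_pow_mul_invMotzkinPoly ω 0 (m + 2) n
  have h1 := coeff_X_pow_mul_invMotzkinPoly ω 1 (m + 1) n
  have h2 := coeff_X_pow_mul_invMotzkinPoly ω 2 m n
  simp only [pow_zero, one_mul, pow_one, show m + 1 + 1 = m + 2 by rfl] at h0 h1
  rw [map_add, map_add, mul_assoc, coeff_C_mul, h0, h1, h2, coeff_invMotzkinPoly]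
  by_cases hn : n + 1 ≤ m + 2
  · have hdenom : coeff n ((motzkinDenom ω)⁻¹ ^ (m + 2 - n)) +
        ω * coeff n (X * (motzkinDenom ω)⁻¹ ^ (m + 2 - n)) +
        coeff n (X ^ 2 * (motzkinDenom ω)⁻¹ ^ (m + 2 - n)) =
        coeff n ((motzkinDenom ω)⁻¹ ^ (m + 1 - n)) := by
      rw [show m + 2 - n = m + 1 - n + 1 by omega, ← motzkinDenom_mul_inv_pow_succ ω (m + 1 - n)]
      simp only [motzkinDenom, add_mul, one_mul, map_add, mul_assoc, coeff_C_mul]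
    rw [if_pos hn, if_pos hn, if_pos hn, hdenom]
    split_ifs with hn'
    · rfl
    · rw [show m + 1 - n = 0 by omega, pow_zero, coeff_one, if_neg (by omega)]
  · simp [hn, show ¬n + 1 ≤ m + 1 by omega]

end InverseMotzkin

section BoundedMotzkin

variable (ω : ℚ) (k : ℕ)

noncomputable def motzkinBSeries (j : ℤ) : ℚ⟦X⟧ := mk fun n => motzkinB ω k n j

theorem motzkinBSeries_eq_zero {j : ℤ} (hj : j < 0 ∨ (k : ℤ) ≤ j) : motzkinBSeries ω k j = 0 := by
  ext (_ | n)
  · simp only [motzkinBSeries, coeff_mk, motzkinB, map_zero]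
    rw [if_neg (by omega)]
  · simp only [motzkinBSeries, coeff_mk, motzkinB, map_zero, if_pos hj]

theorem motzkinBSeries_eq {j : ℤ} (h0 : 0 ≤ j) (hk : j < k) :
    motzkinBSeries ω k j = (if j = 0 then 1 else 0) +
      X * (motzkinBSeries ω k (j - 1) + C ω * motzkinBSeries ω k j + motzkinBSeries ω k (j + 1)) := by
  ext (_ | n)
  · by_cases hj : j = 0 <;> simp [motzkinBSeries, motzkinB, hj]
    omega
  · simp only [motzkinBSeries, coeff_mk, motzkinB, map_add, coeff_succ_X_mul, coeff_C_mul]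
    rw [if_neg (by omega)]
    split_ifs <;> simp [coeff_one]

variable {k} (U : ℕ → ℚ⟦X⟧)

theorem motzkinBSeries_mul_telescope (hU0 : U 0 = 0)
    (hU : ∀ n, U (n + 2) + C ω * X * U (n + 1) + X ^ 2 * U n = U (n + 1)) {d : ℕ} (hd : d ≤ k) :
    U (d + 1) * motzkinBSeries ω k (k - d) =
      X * U d * motzkinBSeries ω k (k - d - 1) + if d = k then U d else 0 := by
  induction d with
  | zero => simp [hU0, motzkinBSeries_eq_zero ω k (j := k) (by omega)]
  | succ d ih =>
    have hstep := motzkinBSeries_eq ω k (j := k - (d + 1)) (by omega) (by omega)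
    have hnext := ih (by omega)
    rw [if_neg (by omega), show (k : ℤ) - d = k - (d + 1) + 1 by ring, add_sub_cancel_right] at hnext
    have hδ : (if d + 1 = k then U (d + 1) else 0) =
        (if (k : ℤ) - (d + 1) = 0 then 1 else 0) * U (d + 1) := by
      rw [ite_zero_mul, one_mul]
      exact if_congr (by omega) rfl rfl
    push_cast
    rw [hδ]
    linear_combination motzkinBSeries ω k (k - (d + 1)) * hU d + U (d + 1) * hstep + X * hnext

theorem motzkinBSeries_zero_mul (hU0 : U 0 = 0)
    (hU : ∀ n, U (n + 2) + C ω * X * U (n + 1) + X ^ 2 * U n = U (n + 1)) :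
    motzkinBSeries ω k 0 * U (k + 1) = U k := by
  have h := motzkinBSeries_mul_telescope ω U hU0 hU (le_refl k)
  rwa [sub_self, zero_sub, motzkinBSeries_eq_zero ω k (j := -1) (by omega), mul_zero, zero_add,
    if_pos rfl, mul_comm] at h

end BoundedMotzkin

theorem bounded_motzkin_gf_general (ω : ℚ) (k : ℕ) :
    (PowerSeries.mk fun n => motzkinB ω k n 0) *
        (∑ i ∈ Finset.range (k+1), PowerSeries.C (R := ℚ) (minv ω k i) * PowerSeries.X ^ (k - i)) =
      ∑ i ∈ Finset.range k, PowerSeries.C (R := ℚ) (minv ω (k-1) i) * PowerSeries.X ^ (k-1-i) := by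
  have h := motzkinBSeries_zero_mul ω (invMotzkinPoly ω) (invMotzkinPoly_zero ω)
    (invMotzkinPoly_add_two ω) (k := k)
  rwa [invMotzkinPoly, Nat.add_sub_cancel] at h

theorem bounded_motzkin_gf (ω : ℚ) (k : ℕ) (hk : 1 ≤ k) :
    (PowerSeries.mk fun n => motzkinB ω k n 0) *
        (∑ i ∈ Finset.range (k+1), PowerSeries.C (R := ℚ) (minv ω k i) * PowerSeries.X ^ (k - i)) =
      ∑ i ∈ Finset.range k, PowerSeries.C (R := ℚ) (minv ω (k-1) i) * PowerSeries.X ^ (k-1-i) :=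
  bounded_motzkin_gf_general ω k
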